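/- Lemma 1 (Asymptotic rate of convergence without self-awareness). Suppose the agents run the partial-information algorithm without self-awareness with transmitted hypothesis θ_TX, under Assumptions 1 and 2. Then for every θ ∈ Θ∖{θ_TX} and every agent k, (1/i) log(μ_{k,i}(θ)/μ_{k,i}(θ_TX)) → d_ave(θ_TX) − d_ave(θ̄_TX) almost surely as i → ∞. -/

import Mathlib

/-
The log-odds `β k i = log (μ k i θ / μ k i θTX)` follow an exact linear recursion. From the first
step on, every agent's beliefs on the hypotheses other than `θTX` coincide, so the coarse-grained
Bayes update moves the odds of `θTX` exactly as a Bayes update with the fictitious likelihood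
`L(·|θ̄TX)` would, and geometric pooling is linear in log-odds:
`β (i + 1) = (β i + y i) ᵥ* A` with i.i.d. innovations `y ℓ i = log (L ℓ (ξ|θ̄TX) / L ℓ (ξ|θTX))`.
Unrolled, `β k i` is a sum of innovations weighted by the `k`-th columns of powers of `A`. These
converge geometrically to the Perron vector `v` (a positive power of `A` is a Dobrushin
contraction), so the deviation is a convolution of a summable kernel with sublinearly growing
innovations, hence `o(i)`, and the main term is a `v`-weighted Cesàro mean of the innovations,
which converges by the strong law of large numbers.
-/

open MeasureTheory ProbabilityTheory Filter Topology Finset Asymptotics Matrix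

theorem summable_pow_nat_div_of_lt_one {ρ : ℝ} (hρ0 : 0 ≤ ρ) (hρ1 : ρ < 1) {N : ℕ} (hN : N ≠ 0) :
    Summable fun p : ℕ => ρ ^ (p / N) := by
  set σ := max ρ 2⁻¹
  have hσ0 : 0 < σ := lt_max_of_lt_right (by norm_num)
  have hσ1 : σ < 1 := max_lt hρ1 (by norm_num)
  set r := σ ^ (N⁻¹ : ℝ)
  have hr0 : 0 < r := Real.rpow_pos_of_pos hσ0 _
  have hrN : r ^ N = σ := Real.rpow_inv_natCast_pow hσ0.le hN
  have hr1 : r < 1 := by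
    by_contra! h
    exact hσ1.not_ge (hrN ▸ one_le_pow₀ h)
  -- compare with the geometric series of ratio `r = σ ^ (1 / N)`, using `p < N * (p / N + 1)`;
  -- `σ = max ρ 2⁻¹` rather than `ρ` keeps `r` positive
  refine (summable_geometric_of_lt_one hr0.le hr1 |>.mul_left σ⁻¹).of_nonneg_of_le
    (fun p => by positivity) fun p => ?_
  calc ρ ^ (p / N) ≤ σ ^ (p / N) := pow_le_pow_left₀ hρ0 (le_max_left _ _) _
    _ = σ⁻¹ * (r ^ N) ^ (p / N + 1) := by rw [hrN, pow_succ]; field_simp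
    _ ≤ σ⁻¹ * r ^ p := by
        rw [← pow_mul]
        exact mul_le_mul_of_nonneg_left (pow_le_pow_of_le_one hr0.le hr1.le
          (Nat.lt_mul_div_succ p (Nat.pos_of_ne_zero hN)).le) (by positivity)

theorem tendsto_comp_add_one_div_natCast_iff {f : ℕ → ℝ} {c : ℝ} :
    Tendsto (fun n : ℕ => f (n + 1) / n) atTop (𝓝 c) ↔
      Tendsto (fun n : ℕ => f n / n) atTop (𝓝 c) := by
  refine Iff.trans ?_ (tendsto_add_atTop_iff_nat 1)
  have hratio : Tendsto (fun n : ℕ => (n : ℝ) / (n + 1)) atTop (𝓝 1) :=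
    tendsto_natCast_div_add_atTop 1
  have hratio' : Tendsto (fun n : ℕ => ((n : ℝ) + 1) / n) atTop (𝓝 1) := by
    simpa using hratio.inv₀ one_ne_zero
  constructor
  · intro h
    refine (mul_one c ▸ h.mul hratio).congr' ?_
    filter_upwards [eventually_ne_atTop 0] with n hn
    push_cast
    field_simp
  · intro h
    refine (mul_one c ▸ h.mul hratio').congr' ?_
    filter_upwards [eventually_ne_atTop 0] with n hn
    push_cast
    field_simp

theorem tendsto_sum_range_comp_add_one_div {y : ℕ → ℝ} {c : ℝ}
    (h : Tendsto (fun n : ℕ => (∑ j ∈ range n, y j) / n) atTop (𝓝 c)) :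
    Tendsto (fun n : ℕ => (∑ j ∈ range n, y (j + 1)) / n) atTop (𝓝 c) := by
  have := (tendsto_comp_add_one_div_natCast_iff.2 h).sub
    (tendsto_const_div_atTop_nhds_zero_nat (y 0))
  rw [sub_zero] at this
  refine this.congr fun n => ?_
  rw [sum_range_succ', ← sub_div, add_sub_cancel_right]

theorem isLittleO_natCast_of_tendsto_sum_range_div {y : ℕ → ℝ} {c : ℝ}
    (h : Tendsto (fun n : ℕ => (∑ j ∈ range n, y j) / n) atTop (𝓝 c)) :
    y =o[atTop] (fun n => (n : ℝ)) := by
  rw [isLittleO_iff_tendsto' (eventually_ne_atTop 0 |>.mono fun n hn h0 => absurd h0 (by simpa))]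
  have := (tendsto_comp_add_one_div_natCast_iff.2 h).sub h
  rw [sub_self] at this
  refine this.congr fun n => ?_
  rw [sum_range_succ, ← sub_div, add_sub_cancel_left]

theorem isLittleO_sum_range_mul_of_summable {δ u : ℕ → ℝ} (hδ : Summable δ)
    (hδ0 : ∀ p, 0 ≤ δ p) (hu : u =o[atTop] (fun j => (j : ℝ))) :
    (fun i => ∑ j ∈ range i, δ (i - j) * u j) =o[atTop] (fun i => (i : ℝ)) := by
  rw [isLittleO_iff] at hu ⊢
  intro c hc
  set D := ∑' p, δ p
  have hD : 0 ≤ D := tsum_nonneg hδ0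
  set ε := c / (2 * (D + 1))
  obtain ⟨J, hJ⟩ := eventually_atTop.1 (hu (c := ε) (by positivity))
  set C := ∑ j ∈ range J, ‖u j‖
  have hC : 0 ≤ C := sum_nonneg fun j _ => norm_nonneg _
  have hu_le : ∀ i, ∀ j ∈ range i, ‖u j‖ ≤ ε * i + C := by
    intro i j hj
    have hji : (j : ℝ) ≤ i := by exact_mod_cast (mem_range.1 hj).le
    by_cases hjJ : J ≤ j
    · have := hJ j hjJ
      rw [Real.norm_natCast] at this
      nlinarith [show 0 < ε by positivity]
    · have := single_le_sum (fun j _ => norm_nonneg (u j)) (mem_range.2 (not_le.1 hjJ))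
      nlinarith [show 0 < ε by positivity, (Nat.cast_nonneg i : (0 : ℝ) ≤ i)]
  have hδ_le : ∀ i, ∑ j ∈ range i, δ (i - j) ≤ D := by
    intro i
    calc ∑ j ∈ range i, δ (i - j) = ∑ j ∈ range i, δ (j + 1) := by
          rw [← sum_range_reflect]
          exact sum_congr rfl fun j hj => by congr 1; have := mem_range.1 hj; omega
      _ ≤ ∑ j ∈ range (i + 1), δ j := by
          rw [sum_range_succ' δ]; exact le_add_of_nonneg_right (hδ0 0)
      _ ≤ D := hδ.sum_le_tsum _ fun j _ => hδ0 j
  filter_upwards [eventually_ge_atTop ⌈2 * D * C / c⌉₊] with i hi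
  have hi' : 2 * D * C / c ≤ i := Nat.ceil_le.1 hi
  rw [div_le_iff₀ hc] at hi'
  calc ‖∑ j ∈ range i, δ (i - j) * u j‖ ≤ ∑ j ∈ range i, δ (i - j) * (ε * i + C) := by
        refine (norm_sum_le _ _).trans (sum_le_sum fun j hj => ?_)
        rw [norm_mul, Real.norm_of_nonneg (hδ0 _)]
        exact mul_le_mul_of_nonneg_left (hu_le i j hj) (hδ0 _)
    _ ≤ D * (ε * i + C) := by
        rw [← sum_mul]
        exact mul_le_mul_of_nonneg_right (hδ_le i) (by positivity)
    _ ≤ c * ‖(i : ℝ)‖ := by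
        have : D * ε ≤ c / 2 := by
          rw [show D * ε = c / 2 * (D / (D + 1)) by simp only [ε]; field_simp]
          exact mul_le_of_le_one_right (by positivity)
            ((div_le_one (by positivity)).2 (by linarith))
        rw [Real.norm_natCast]
        nlinarith [(Nat.cast_nonneg i : (0 : ℝ) ≤ i)]

namespace Matrix

variable {n : Type*} [Fintype n] [DecidableEq n]

/-- Dobrushin's contraction estimate. -/
theorem sum_abs_mulVec_le_of_le_apply {B : Matrix n n ℝ} (hB : B ∈ colStochastic ℝ n) {ε : ℝ}
    (hε : ∀ i j, ε ≤ B i j) {z : n → ℝ} (hz : ∑ j, z j = 0) :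
    ∑ i, |(B *ᵥ z) i| ≤ (1 - Fintype.card n * ε) * ∑ j, |z j| := by
  have hshift : ∀ i, (B *ᵥ z) i = ∑ j, (B i j - ε) * z j := fun i => by
    simp only [mulVec, dotProduct, sub_mul, sum_sub_distrib, ← mul_sum, hz, mul_zero, sub_zero]
  calc ∑ i, |(B *ᵥ z) i| ≤ ∑ i, ∑ j, (B i j - ε) * |z j| := by
        gcongr with i
        rw [hshift]
        refine (abs_sum_le_sum_abs _ _).trans_eq (sum_congr rfl fun j _ => ?_)
        rw [abs_mul, abs_of_nonneg (sub_nonneg.2 (hε i j))]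
    _ = (1 - Fintype.card n * ε) * ∑ j, |z j| := by
        rw [sum_comm, mul_sum]
        refine sum_congr rfl fun j _ => ?_
        rw [← sum_mul, sum_sub_distrib, sum_col_of_mem_colStochastic hB, sum_const, card_univ,
          nsmul_eq_mul]

theorem le_mul_apply_of_le_apply {A M : Matrix n n ℝ} (hM : M ∈ colStochastic ℝ n) {ε : ℝ}
    (hε : ∀ i j, ε ≤ A i j) (i j : n) : ε ≤ (A * M) i j :=
  calc ε = ∑ l, ε * M l j := by rw [← Finset.mul_sum, sum_col_of_mem_colStochastic hM, mul_one]
    _ ≤ (A * M) i j := Finset.sum_le_sum fun l _ => mul_le_mul_of_nonneg_right (hε i l) (hM.1 l j)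

theorem sum_abs_pow_mulVec_le {B : Matrix n n ℝ} (hB : B ∈ colStochastic ℝ n) {N : ℕ} {ρ : ℝ}
    (hρ : ∀ z : n → ℝ, ∑ j, z j = 0 → ∑ i, |(B ^ N *ᵥ z) i| ≤ ρ * ∑ j, |z j|) (hρ0 : 0 ≤ ρ)
    {z : n → ℝ} (hz : ∑ j, z j = 0) (p : ℕ) :
    ∑ i, |(B ^ p *ᵥ z) i| ≤ ρ ^ (p / N) * ∑ j, |z j| := by
  have hsum : ∀ q, ∑ j, (B ^ q *ᵥ z) j = 0 := fun q => by
    rw [sum_mulVec_of_mem_colStochastic (pow_mem hB q), hz]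
  have hmono : Antitone fun q => ∑ i, |(B ^ q *ᵥ z) i| := antitone_nat_of_succ_le fun q => by
    have := sum_abs_mulVec_le_of_le_apply hB (fun i j => hB.1 i j) (hsum q)
    rwa [mul_zero, sub_zero, one_mul, mulVec_mulVec, ← pow_succ'] at this
  have hblock : ∀ q, ∑ i, |(B ^ (N * q) *ᵥ z) i| ≤ ρ ^ q * ∑ j, |z j| := by
    intro q
    induction q with
    | zero => simp
    | succ q ih =>
      calc ∑ i, |(B ^ (N * (q + 1)) *ᵥ z) i| ≤ ρ * ∑ i, |(B ^ (N * q) *ᵥ z) i| := by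
            rw [mul_add_one, add_comm, pow_add, ← mulVec_mulVec]
            exact hρ _ (hsum _)
        _ ≤ ρ ^ (q + 1) * ∑ j, |z j| := by rw [pow_succ', mul_assoc]; gcongr
  exact (hmono (Nat.mul_div_le p N)).trans (hblock _)

theorem pow_mulVec_eq_self {B : Matrix n n ℝ} {v : n → ℝ} (hBv : B *ᵥ v = v) (p : ℕ) :
    B ^ p *ᵥ v = v := by
  induction p with
  | zero => rw [pow_zero, one_mulVec]
  | succ p ih => rw [pow_succ', ← mulVec_mulVec, ih, hBv]

theorem summable_sum_abs_pow_apply_sub {B : Matrix n n ℝ} (hB : B ∈ colStochastic ℝ n)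
    (hprim : ∃ N, ∀ i j, 0 < (B ^ N) i j) {v : n → ℝ} (hBv : B *ᵥ v = v) (hv : ∑ i, v i = 1)
    (k : n) : Summable fun p => ∑ i, |(B ^ p) i k - v i| := by
  obtain ⟨N, hN⟩ := hprim
  obtain ⟨⟨i₀, j₀⟩, -, hmin⟩ := Finset.exists_min_image Finset.univ
    (fun ij : n × n => (B ^ N) ij.1 ij.2) ⟨(k, k), Finset.mem_univ _⟩
  set ε := (B ^ N) i₀ j₀
  have hε : ∀ i j, ε ≤ (B ^ (N + 1)) i j :=
    le_mul_apply_of_le_apply hB fun i j => hmin (i, j) (Finset.mem_univ _)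
  set ρ := 1 - Fintype.card n * ε
  have hρ0 : 0 ≤ ρ := by
    have := Finset.card_nsmul_le_sum Finset.univ (fun i => (B ^ (N + 1)) i k) ε fun i _ => hε i k
    rw [sum_col_of_mem_colStochastic (pow_mem hB _), nsmul_eq_mul, Finset.card_univ] at this
    linarith
  have hρ1 : ρ < 1 := by
    have : 0 < (Fintype.card n : ℝ) * ε :=
      mul_pos (by simpa using Fintype.card_pos_iff.2 ⟨k⟩) (hN i₀ j₀)
    linarith
  set z := Pi.single k 1 - v
  have hz : ∑ j, z j = 0 := by simp [z, Finset.sum_sub_distrib, hv]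
  have hpow : ∀ p i, (B ^ p *ᵥ z) i = (B ^ p) i k - v i := fun p i => by
    simp [z, mulVec_sub, pow_mulVec_eq_self hBv]
  refine ((summable_pow_nat_div_of_lt_one hρ0 hρ1 N.succ_ne_zero).mul_right (∑ j, |z j|))
    |>.of_nonneg_of_le (fun p => by positivity) fun p => ?_
  simpa only [hpow] using sum_abs_pow_mulVec_le hB
    (fun w hw => sum_abs_mulVec_le_of_le_apply (pow_mem hB _) hε hw) hρ0 hz p

theorem eq_vecMul_pow_add_sum_of_recursion {R : Type*} [Semiring R] {B : Matrix n n R}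
    {x y : ℕ → n → R} (hx : ∀ i, x (i + 1) = (x i + y i) ᵥ* B) (i : ℕ) :
    x i = x 0 ᵥ* B ^ i + ∑ j ∈ range i, y j ᵥ* B ^ (i - j) := by
  induction i with
  | zero => simp
  | succ i ih =>
    rw [hx, ih, add_vecMul, add_vecMul, vecMul_vecMul, ← pow_succ, sum_vecMul, sum_range_succ,
      Nat.add_sub_cancel_left, pow_one, add_assoc]
    congr 2
    refine sum_congr rfl fun j hj => ?_
    rw [vecMul_vecMul, ← pow_succ, Nat.sub_add_comm (mem_range.1 hj).le]

theorem tendsto_div_of_vecMul_recursion {B : Matrix n n ℝ} (hB : B ∈ colStochastic ℝ n)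
    (hprim : ∃ N, ∀ i j, 0 < (B ^ N) i j) {v : n → ℝ} (hBv : B *ᵥ v = v) (hv : ∑ i, v i = 1)
    {x y : ℕ → n → ℝ} (hx : ∀ i, x (i + 1) = (x i + y i) ᵥ* B) {c : n → ℝ}
    (hy : ∀ l, Tendsto (fun m : ℕ => (∑ j ∈ range m, y j l) / m) atTop (𝓝 (c l))) (k : n) :
    Tendsto (fun i : ℕ => x i k / i) atTop (𝓝 (∑ l, v l * c l)) := by
  set δ := fun p => ∑ l, |(B ^ p) l k - v l|
  set err := fun (w : n → ℝ) p => ∑ l, w l * ((B ^ p) l k - v l)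
  have hsplit : ∀ w p, (w ᵥ* B ^ p) k = ∑ l, v l * w l + err w p := fun w p => by
    simp only [err, vecMul, dotProduct, mul_sub, sum_sub_distrib, mul_comm (v _)]
    ring
  have herr : ∀ w p, ‖err w p‖ ≤ δ p * ∑ l, |w l| := fun w p => by
    rw [mul_sum]
    refine (norm_sum_le _ _).trans (sum_le_sum fun l _ => ?_)
    rw [norm_mul, Real.norm_eq_abs, Real.norm_eq_abs, mul_comm]
    exact mul_le_mul_of_nonneg_right
      (single_le_sum (f := fun l => |(B ^ p) l k - v l|) (fun _ _ => abs_nonneg _) (mem_univ l))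
      (abs_nonneg _)
  have hinit : (fun i : ℕ => (x 0 ᵥ* B ^ i) k) =o[atTop] (fun i => (i : ℝ)) := by
    refine IsBigO.trans_isLittleO (g := fun _ => (1 : ℝ)) (IsBigO.of_bound (∑ l, |x 0 l|)
      (Eventually.of_forall fun i => ?_)) ((isLittleO_one_left_iff ℝ).2 ?_)
    · rw [norm_one, mul_one, Real.norm_eq_abs]
      refine (abs_sum_le_sum_abs _ _).trans (sum_le_sum fun l _ => ?_)
      rw [abs_mul, abs_of_nonneg (nonneg_of_mem_colStochastic (pow_mem hB i))]
      exact mul_le_of_le_one_right (abs_nonneg _) (le_one_of_mem_colStochastic (pow_mem hB i))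
    · simpa using tendsto_natCast_atTop_atTop
  have hy_small : (fun j => ∑ l, |y j l|) =o[atTop] (fun j => (j : ℝ)) := by
    simpa only [Finset.sum_fn] using IsLittleO.sum (s := univ) fun l _ =>
      (isLittleO_natCast_of_tendsto_sum_range_div (hy l)).abs_left
  have hconv : (fun i => ∑ j ∈ range i, err (y j) (i - j)) =o[atTop] (fun i => (i : ℝ)) := by
    refine IsBigO.trans_isLittleO (IsBigO.of_bound' (Eventually.of_forall fun i => ?_))
      (isLittleO_sum_range_mul_of_summable (summable_sum_abs_pow_apply_sub hB hprim hBv hv k)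
        (fun p => sum_nonneg fun l _ => abs_nonneg _) hy_small)
    refine (norm_sum_le _ _).trans ((sum_le_sum fun j _ => herr _ _).trans (le_abs_self _))
  have hmean : Tendsto (fun i : ℕ => ∑ l, v l * ((∑ j ∈ range i, y j l) / i)) atTop
      (𝓝 (∑ l, v l * c l)) :=
    tendsto_finsetSum _ fun l _ => (hy l).const_mul (v l)
  have := hmean.add (hinit.add hconv).tendsto_div_nhds_zero
  rw [add_zero] at this
  refine this.congr fun i => ?_
  have hmix : ∑ j ∈ range i, ∑ l, v l * y j l = ∑ l, v l * ∑ j ∈ range i, y j l := by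
    rw [sum_comm]; simp only [mul_sum]
  rw [eq_vecMul_pow_add_sum_of_recursion hx i, Pi.add_apply, Finset.sum_apply,
    sum_congr rfl fun j _ => hsplit (y j) (i - j), sum_add_distrib, hmix]
  simp only [add_div, sum_div, mul_div_assoc]
  ring

end Matrix

theorem abs_log_div_mean_le {ι : Type*} {s : Finset ι} (hs : s.Nonempty) {f : ι → ℝ}
    (hf : ∀ i ∈ s, 0 < f i) {y : ℝ} (hy : 0 < y) :
    |Real.log (y / ((∑ i ∈ s, f i) / s.card))| ≤ ∑ i ∈ s, |Real.log (y / f i)| := by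
  set m := (∑ i ∈ s, f i) / s.card
  have hsum : ∑ i ∈ s, f i = ∑ _i ∈ s, m := by
    rw [sum_const, nsmul_eq_mul, mul_div_cancel₀ _ (by exact_mod_cast hs.card_pos.ne')]
  obtain ⟨i, hi, hfi⟩ := exists_le_of_sum_le hs hsum.le
  obtain ⟨j, hj, hfj⟩ := exists_le_of_sum_le hs hsum.ge
  have hm : 0 < m := (hf i hi).trans_le hfi
  have hterm : ∀ l ∈ s, |Real.log (y / f l)| ≤ ∑ i ∈ s, |Real.log (y / f i)| := fun l hl =>
    single_le_sum (f := fun i => |Real.log (y / f i)|) (fun _ _ => abs_nonneg _) hl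
  rw [abs_le]
  constructor
  · have : Real.log (y / f j) ≤ Real.log (y / m) :=
      Real.log_le_log (div_pos hy (hf j hj)) (div_le_div_of_nonneg_left hy.le hm hfj)
    linarith [neg_abs_le (Real.log (y / f j)), hterm j hj]
  · have : Real.log (y / m) ≤ Real.log (y / f i) :=
      Real.log_le_log (div_pos hy hm) (div_le_div_of_nonneg_left hy.le (hf i hi) hfi)
    linarith [le_abs_self (Real.log (y / f i)), hterm i hi]

theorem log_div_eq_log_div_sub_log_div {a b c : ℝ} (ha : 0 < a) (hb : 0 < b) (hc : 0 < c) :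
    Real.log (b / c) = Real.log (a / c) - Real.log (a / b) := by
  rw [Real.log_div hb.ne' hc.ne', Real.log_div ha.ne' hc.ne', Real.log_div ha.ne' hb.ne']
  ring

section Likelihood

variable {Ω X Θ : Type*} [MeasurableSpace Ω] [MeasurableSpace X] {P : Measure Ω} {ν : Measure X}

theorem integrable_comp_of_map_eq_withDensity {ρ : X → ℝ} (hρ : Measurable ρ) (hρ0 : ∀ x, 0 ≤ ρ x)
    {ξ : Ω → X} (hξ : Measurable ξ) (hmap : P.map ξ = ν.withDensity fun x => ENNReal.ofReal (ρ x))
    {g : X → ℝ} (hg : Measurable g) (hint : Integrable (fun x => ρ x * g x) ν) :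
    Integrable (fun ω => g (ξ ω)) P := by
  refine (integrable_map_measure hg.aestronglyMeasurable hξ.aemeasurable).1 ?_
  rw [hmap, integrable_withDensity_iff hρ.ennreal_ofReal
    (Eventually.of_forall fun _ => ENNReal.ofReal_lt_top)]
  refine hint.congr (Eventually.of_forall fun x => ?_)
  simp only [ENNReal.toReal_ofReal (hρ0 x), mul_comm]

theorem integrable_mul_log_div_mean {L : Θ → X → ℝ} (hL : ∀ θ x, 0 < L θ x)
    (hLmeas : ∀ θ, Measurable (L θ)) (θ₀ : Θ) {s : Finset Θ} (hs : s.Nonempty)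
    (hKL : ∀ τ ∈ s, Integrable (fun x => L θ₀ x * Real.log (L θ₀ x / L τ x)) ν) :
    Integrable (fun x => L θ₀ x * Real.log (L θ₀ x / ((∑ τ ∈ s, L τ x) / s.card))) ν := by
  refine (integrable_finsetSum s fun τ hτ => (hKL τ hτ).abs).mono'
    (by fun_prop : Measurable fun x =>
      L θ₀ x * Real.log (L θ₀ x / ((∑ τ ∈ s, L τ x) / s.card))).aestronglyMeasurable
    (Eventually.of_forall fun x => ?_)
  simp only [Real.norm_eq_abs, abs_mul, abs_of_pos (hL θ₀ x), ← mul_sum]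
  exact mul_le_mul_of_nonneg_left (abs_log_div_mean_le hs (fun τ _ => hL τ x) (hL θ₀ x))
    (hL θ₀ x).le

theorem integrable_log_div_comp {L : Θ → X → ℝ} (hL : ∀ θ x, 0 < L θ x)
    (hLmeas : ∀ θ, Measurable (L θ)) {θ₀ : Θ} {ξ : Ω → X} (hξ : Measurable ξ)
    (hmap : P.map ξ = ν.withDensity fun x => ENNReal.ofReal (L θ₀ x)) {τ : Θ}
    (hKL : Integrable (fun x => L θ₀ x * Real.log (L θ₀ x / L τ x)) ν) :
    Integrable (fun ω => Real.log (L θ₀ (ξ ω) / L τ (ξ ω))) P :=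
  integrable_comp_of_map_eq_withDensity (hLmeas θ₀) (fun x => (hL θ₀ x).le) hξ hmap
    (by fun_prop) hKL

theorem integrable_log_div_mean_comp {L : Θ → X → ℝ} (hL : ∀ θ x, 0 < L θ x)
    (hLmeas : ∀ θ, Measurable (L θ)) {θ₀ : Θ} {ξ : Ω → X} (hξ : Measurable ξ)
    (hmap : P.map ξ = ν.withDensity fun x => ENNReal.ofReal (L θ₀ x)) {s : Finset Θ}
    (hs : s.Nonempty) (hKL : ∀ τ ∈ s, Integrable (fun x => L θ₀ x * Real.log (L θ₀ x / L τ x)) ν) :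
    Integrable (fun ω => Real.log (L θ₀ (ξ ω) / ((∑ τ ∈ s, L τ (ξ ω)) / s.card))) P :=
  integrable_comp_of_map_eq_withDensity (hLmeas θ₀) (fun x => (hL θ₀ x).le) hξ hmap
    (by fun_prop) (integrable_mul_log_div_mean hL hLmeas θ₀ hs hKL)

theorem sum_div_card_pos {ι : Type*} {s : Finset ι} (hs : s.Nonempty) {f : ι → ℝ}
    (hf : ∀ i ∈ s, 0 < f i) :
    0 < (∑ i ∈ s, f i) / s.card :=
  div_pos (sum_pos hf hs) (Nat.cast_pos.2 hs.card_pos)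

theorem measurable_log_mean_div {L : Θ → X → ℝ} (hLmeas : ∀ θ, Measurable (L θ)) (s : Finset Θ)
    (θ₁ : Θ) : Measurable fun x => Real.log ((∑ τ ∈ s, L τ x) / s.card / L θ₁ x) := by
  fun_prop

theorem integrable_log_mean_div_comp {L : Θ → X → ℝ} (hL : ∀ θ x, 0 < L θ x)
    (hLmeas : ∀ θ, Measurable (L θ)) {θ₀ : Θ} {ξ : Ω → X} (hξ : Measurable ξ)
    (hmap : P.map ξ = ν.withDensity fun x => ENNReal.ofReal (L θ₀ x)) {s : Finset Θ}
    (hs : s.Nonempty) (θ₁ : Θ)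
    (hKL : ∀ τ, Integrable (fun x => L θ₀ x * Real.log (L θ₀ x / L τ x)) ν) :
    Integrable (fun ω => Real.log ((∑ τ ∈ s, L τ (ξ ω)) / s.card / L θ₁ (ξ ω))) P :=
  ((integrable_log_div_comp hL hLmeas hξ hmap (hKL θ₁)).sub
    (integrable_log_div_mean_comp hL hLmeas hξ hmap hs fun τ _ => hKL τ)).congr
    (Eventually.of_forall fun _ => (log_div_eq_log_div_sub_log_div (hL θ₀ _)
      (sum_div_card_pos hs fun τ _ => hL τ _) (hL θ₁ _)).symm)

theorem integral_log_mean_div_comp {L : Θ → X → ℝ} (hL : ∀ θ x, 0 < L θ x)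
    (hLmeas : ∀ θ, Measurable (L θ)) {θ₀ : Θ} {ξ : Ω → X} (hξ : Measurable ξ)
    (hmap : P.map ξ = ν.withDensity fun x => ENNReal.ofReal (L θ₀ x)) {s : Finset Θ}
    (hs : s.Nonempty) (θ₁ : Θ)
    (hKL : ∀ τ, Integrable (fun x => L θ₀ x * Real.log (L θ₀ x / L τ x)) ν) :
    ∫ ω, Real.log ((∑ τ ∈ s, L τ (ξ ω)) / s.card / L θ₁ (ξ ω)) ∂P =
      (∫ ω, Real.log (L θ₀ (ξ ω) / L θ₁ (ξ ω)) ∂P) -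
        ∫ ω, Real.log (L θ₀ (ξ ω) / ((∑ τ ∈ s, L τ (ξ ω)) / s.card)) ∂P := by
  rw [← integral_sub (integrable_log_div_comp hL hLmeas hξ hmap (hKL θ₁))
    (integrable_log_div_mean_comp hL hLmeas hξ hmap hs fun τ _ => hKL τ)]
  exact integral_congr_ae (Eventually.of_forall fun ω => log_div_eq_log_div_sub_log_div
    (hL θ₀ _) (sum_div_card_pos hs fun τ _ => hL τ _) (hL θ₁ _))

end Likelihood

theorem ae_tendsto_sum_range_div_of_iIndepFun {Ω ι : Type*} [MeasurableSpace Ω] {P : Measure Ω}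
    {X : ι → Type*} [∀ k, MeasurableSpace (X k)] {ξ : ∀ k, ℕ → Ω → X k}
    (hξ : ∀ k i, Measurable (ξ k i)) (hindep : iIndepFun (fun i ω k => ξ k (i + 1) ω) P)
    (hdist : ∀ k i, P.map (ξ k (i + 1)) = P.map (ξ k 1)) (k : ι) {F : X k → ℝ} (hF : Measurable F)
    (hint : Integrable (fun ω => F (ξ k 1 ω)) P) :
    ∀ᵐ ω ∂P, Tendsto (fun n : ℕ => (∑ j ∈ range n, F (ξ k (j + 1) ω)) / n) atTop
      (𝓝 (∫ ω, F (ξ k 1 ω) ∂P)) := by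
  refine strong_law_ae_real (fun j ω => F (ξ k (j + 1) ω)) hint (fun i j hij => ?_) fun j => ?_
  · exact (hindep.comp (fun _ s => F (s k)) fun _ => hF.comp (measurable_pi_apply k)).indepFun hij
  · exact (IdentDistrib.mk (hξ k _).aemeasurable (hξ k _).aemeasurable (hdist k j)).comp hF

theorem softmax_pos {Θ : Type*} [Fintype Θ] (s : Θ → ℝ) (θ : Θ) :
    0 < Real.exp (s θ) / ∑ τ, Real.exp (s τ) :=
  div_pos (Real.exp_pos _) (sum_pos (fun _ _ => Real.exp_pos _) ⟨θ, mem_univ θ⟩)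

theorem log_softmax_div_softmax {Θ : Type*} [Fintype Θ] (s : Θ → ℝ) (θ θ' : Θ) :
    Real.log ((Real.exp (s θ) / ∑ τ, Real.exp (s τ)) / (Real.exp (s θ') / ∑ τ, Real.exp (s τ))) =
      s θ - s θ' := by
  rw [div_div_div_cancel_right₀ (sum_pos (fun _ _ => Real.exp_pos _) ⟨θ, mem_univ θ⟩).ne',
    ← Real.exp_sub, Real.log_exp]

/-- When the prior `μ` is flat off `θTX`, lumping all other hypotheses into one with the
averaged likelihood turns the coarse-grained posterior into an exact Bayes update of the odds. -/
theorem log_one_sub_posterior_sub_log_posterior {Θ : Type*} [Fintype Θ] [DecidableEq Θ]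
    {μ L : Θ → ℝ} (hμ : ∀ τ, 0 < μ τ) (hL : ∀ τ, 0 < L τ) {θTX θ : Θ}
    (hflat : ∀ τ ≠ θTX, μ τ = μ θ) (hθ : θ ≠ θTX) {c : ℝ} (hc : 0 < c) :
    Real.log ((1 - μ θTX * L θTX / ∑ τ, μ τ * L τ) / c) -
        Real.log (μ θTX * L θTX / ∑ τ, μ τ * L τ) =
      Real.log (μ θ / μ θTX) + Real.log ((∑ τ ∈ univ.erase θTX, L τ) / c / L θTX) := by
  have hD : 0 < ∑ τ, μ τ * L τ := sum_pos (fun τ _ => mul_pos (hμ τ) (hL τ)) ⟨θ, mem_univ θ⟩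
  have hpost : 0 < μ θTX * L θTX / ∑ τ, μ τ * L τ := div_pos (mul_pos (hμ θTX) (hL θTX)) hD
  have hLbar : 0 < (∑ τ ∈ univ.erase θTX, L τ) / c / L θTX :=
    div_pos (div_pos (sum_pos (fun τ _ => hL τ) ⟨θ, mem_erase.2 ⟨hθ, mem_univ θ⟩⟩) hc) (hL θTX)
  have hcompl : ∑ τ, μ τ * L τ - μ θTX * L θTX = μ θ * ∑ τ ∈ univ.erase θTX, L τ := by
    rw [← add_sum_erase _ _ (mem_univ θTX), add_sub_cancel_left, mul_sum]
    exact sum_congr rfl fun τ hτ => by rw [hflat τ (ne_of_mem_erase hτ)]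
  have hodds : (1 - μ θTX * L θTX / ∑ τ, μ τ * L τ) / c / (μ θTX * L θTX / ∑ τ, μ τ * L τ) =
      μ θ / μ θTX * ((∑ τ ∈ univ.erase θTX, L τ) / c / L θTX) := by
    have := (hμ θTX).ne'
    have := (hL θTX).ne'
    rw [one_sub_div hD.ne', hcompl]
    field_simp
  have hodds_pos := hodds ▸ mul_pos (div_pos (hμ θ) (hμ θTX)) hLbar
  rw [← Real.log_div ((div_pos_iff_of_pos_right hpost).1 hodds_pos).ne' hpost.ne', hodds,
    Real.log_mul (div_pos (hμ θ) (hμ θTX)).ne' hLbar.ne']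

theorem log_belief_ratio_recursion {Ω : Type*} {K H : ℕ} {X : Fin K → Type*}
    {L : ∀ k : Fin K, Fin H → X k → ℝ} {ξ : ∀ k : Fin K, ℕ → Ω → X k} {a : Fin K → Fin K → ℝ}
    {θTX : Fin H} {μb ψ ψh : Fin K → ℕ → Fin H → Ω → ℝ} {c : ℝ}
    (hLpos : ∀ k θ x, 0 < L k θ x) (hc : 0 < c)
    (hψ : ∀ k (i : ℕ) θ ω, ψ k (i + 1) θ ω =
      μb k i θ ω * L k θ (ξ k (i + 1) ω) / ∑ θ', μb k i θ' ω * L k θ' (ξ k (i + 1) ω))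
    (hψh_tx : ∀ k (i : ℕ) ω, ψh k (i + 1) θTX ω = ψ k (i + 1) θTX ω)
    (hψh_ntx : ∀ k (i : ℕ) θ ω, θ ≠ θTX → ψh k (i + 1) θ ω = (1 - ψ k (i + 1) θTX ω) / c)
    (hcomb : ∀ k (i : ℕ) θ ω, μb k (i + 1) θ ω =
      Real.exp (∑ ℓ, a ℓ k * Real.log (ψh ℓ (i + 1) θ ω)) /
        ∑ θ', Real.exp (∑ ℓ, a ℓ k * Real.log (ψh ℓ (i + 1) θ' ω)))
    (i : ℕ) {θ : Fin H} (hθ : θ ≠ θTX) (ω : Ω) :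
    (fun k => Real.log (μb k (i + 2) θ ω / μb k (i + 2) θTX ω)) =
      ((fun k => Real.log (μb k (i + 1) θ ω / μb k (i + 1) θTX ω)) + fun k =>
        Real.log ((∑ τ ∈ univ.erase θTX, L k τ (ξ k (i + 2) ω)) / c / L k θTX (ξ k (i + 2) ω)))
        ᵥ* Matrix.of a := by
  have hμ : ∀ k τ, 0 < μb k (i + 1) τ ω := fun k τ => by
    rw [hcomb]; exact softmax_pos (fun τ => ∑ ℓ, a ℓ k * Real.log (ψh ℓ (i + 1) τ ω)) τ
  have hflat : ∀ k τ, τ ≠ θTX → μb k (i + 1) τ ω = μb k (i + 1) θ ω := fun k τ hτ => by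
    simp only [hcomb, hψh_ntx _ _ _ _ hθ, hψh_ntx _ _ _ _ hτ]
  funext k
  rw [hcomb k (i + 1) θ ω, hcomb k (i + 1) θTX ω,
    log_softmax_div_softmax (fun τ => ∑ ℓ, a ℓ k * Real.log (ψh ℓ (i + 2) τ ω)), ← sum_sub_distrib]
  refine sum_congr rfl fun ℓ _ => ?_
  rw [← mul_sub, hψh_ntx _ _ _ _ hθ, hψh_tx, hψ, log_one_sub_posterior_sub_log_posterior (hμ ℓ)
    (fun τ => hLpos ℓ τ _) (hflat ℓ) hθ hc, mul_comm]
  rfl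

theorem asymptotic_rate_of_convergence_without_self_awareness_general
    {Ω : Type} [mΩ : MeasurableSpace Ω] (P : Measure Ω) [IsProbabilityMeasure P]
    (K H : ℕ)
    (X : Fin K → Type) [∀ k, MeasurableSpace (X k)]
    (ν : ∀ k, Measure (X k))
    (L : ∀ k : Fin K, Fin H → X k → ℝ)
    (θ0 : Fin H)
    (hLpos : ∀ k θ x, 0 < L k θ x)
    (hLmeas : ∀ k θ, Measurable (L k θ))
    (ξ : ∀ k : Fin K, ℕ → Ω → X k)
    (hξmeas : ∀ k i, Measurable (ξ k i))
    (hξdist : ∀ k (i : ℕ), 1 ≤ i →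
      Measure.map (ξ k i) P = (ν k).withDensity (fun x => ENNReal.ofReal (L k θ0 x)))
    (hξindep : iIndepFun
      (fun (i : ℕ) (ω : Ω) (k : Fin K) => ξ k (i + 1) ω) P)
    (hKL : ∀ k θ θ',
      Integrable (fun x => L k θ x * Real.log (L k θ x / L k θ' x)) (ν k))
    (a : Fin K → Fin K → ℝ)
    (ha_nonneg : ∀ ℓ k, 0 ≤ a ℓ k)
    (ha_stoch : ∀ k, ∑ ℓ, a ℓ k = 1)
    (ha_prim : ∃ n : ℕ, ∀ ℓ k, 0 < ((Matrix.of a) ^ n) ℓ k)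
    (v : Fin K → ℝ)
    (hv_sum : ∑ ℓ, v ℓ = 1)
    (hv_eig : ∀ ℓ, ∑ k, a ℓ k * v k = v ℓ)
    (θTX : Fin H)
    (μb ψ ψh : Fin K → ℕ → Fin H → Ω → ℝ)
    (hψ : ∀ k (i : ℕ) θ ω, ψ k (i + 1) θ ω =
      μb k i θ ω * L k θ (ξ k (i + 1) ω) /
        ∑ θ', μb k i θ' ω * L k θ' (ξ k (i + 1) ω))
    (hψh_tx : ∀ k (i : ℕ) ω, ψh k (i + 1) θTX ω = ψ k (i + 1) θTX ω)
    (hψh_ntx : ∀ k (i : ℕ) θ ω, θ ≠ θTX →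
      ψh k (i + 1) θ ω = (1 - ψ k (i + 1) θTX ω) / ((H : ℝ) - 1))
    (hcomb : ∀ k (i : ℕ) θ ω, μb k (i + 1) θ ω =
      Real.exp (∑ ℓ, a ℓ k * Real.log (ψh ℓ (i + 1) θ ω)) /
        ∑ θ', Real.exp (∑ ℓ, a ℓ k * Real.log (ψh ℓ (i + 1) θ' ω)))
    :
    ∀ (θ : Fin H), θ ≠ θTX → ∀ k : Fin K, ∀ᵐ ω ∂P,
      Tendsto (fun (i : ℕ) => (1 / (i : ℝ)) * Real.log (μb k i θ ω / μb k i θTX ω))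
        atTop (𝓝 ((∑ m, v m * (∫ ω, Real.log (L m θ0 (ξ m 1 ω) / L m θTX (ξ m 1 ω)) ∂P)) - (∑ m, v m * (∫ ω, Real.log (L m θ0 (ξ m 1 ω) / ((∑ τ ∈ Finset.univ.erase θTX, L m τ (ξ m 1 ω)) / ((H : ℝ) - 1))) ∂P)))) := by
  intro θ hθ k
  have hne : (univ.erase θTX).Nonempty := ⟨θ, mem_erase.2 ⟨hθ, mem_univ θ⟩⟩
  have hcard : ((univ.erase θTX).card : ℝ) = (H : ℝ) - 1 := by
    rw [card_erase_of_mem (mem_univ _), card_univ, Fintype.card_fin, Nat.cast_pred θTX.pos]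
  rw [← hcard] at hψh_ntx ⊢
  have hmap := fun m => hξdist m 1 le_rfl
  simp only [← sum_sub_distrib, ← mul_sub, ← integral_log_mean_div_comp (hLpos _) (hLmeas _)
    (hξmeas _ 1) (hmap _) hne θTX (hKL _ θ0)]
  filter_upwards [ae_all_iff.2 fun m => ae_tendsto_sum_range_div_of_iIndepFun hξmeas hξindep
    (fun m i => by rw [hξdist m (i + 1) (Nat.le_add_left 1 i), hmap]) m
    (measurable_log_mean_div (hLmeas m) _ θTX)
    (integrable_log_mean_div_comp (hLpos m) (hLmeas m) (hξmeas m 1) (hmap m) hne θTX (hKL m θ0))]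
    with ω hω
  -- the initial beliefs are arbitrary, so the recursion only starts at time `1`
  have := Matrix.tendsto_div_of_vecMul_recursion (B := Matrix.of a)
    (Matrix.mem_colStochastic_iff_sum.2 ⟨ha_nonneg, ha_stoch⟩) ha_prim (funext hv_eig) hv_sum
    (x := fun i m => Real.log (μb m (i + 1) θ ω / μb m (i + 1) θTX ω))
    (fun i => log_belief_ratio_recursion hLpos (Nat.cast_pos.2 hne.card_pos) hψ hψh_tx hψh_ntx
      hcomb i hθ ω)
    (fun m => (tendsto_sum_range_comp_add_one_div (hω m) :)) k
  simpa only [one_div_mul_eq_div] using (tendsto_comp_add_one_div_natCast_iff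
    (f := fun i => Real.log (μb k i θ ω / μb k i θTX ω))).1 this

theorem asymptotic_rate_of_convergence_without_self_awareness
    {Ω : Type} [mΩ : MeasurableSpace Ω] (P : Measure Ω) [IsProbabilityMeasure P]
    (K H : ℕ) (hK : 0 < K) (hH : 2 ≤ H)
    (X : Fin K → Type) [∀ k, MeasurableSpace (X k)]
    (ν : ∀ k, Measure (X k))
    (L : ∀ k : Fin K, Fin H → X k → ℝ)
    (θ0 : Fin H)
    (hLpos : ∀ k θ x, 0 < L k θ x)
    (hLmeas : ∀ k θ, Measurable (L k θ))
    (hLdens : ∀ k θ, ∫ x, L k θ x ∂(ν k) = 1)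
    (ξ : ∀ k : Fin K, ℕ → Ω → X k)
    (hξmeas : ∀ k i, Measurable (ξ k i))
    (hξdist : ∀ k (i : ℕ), 1 ≤ i →
      Measure.map (ξ k i) P = (ν k).withDensity (fun x => ENNReal.ofReal (L k θ0 x)))
    (hξindep : iIndepFun
      (fun (i : ℕ) (ω : Ω) (k : Fin K) => ξ k (i + 1) ω) P)
    (hKL : ∀ k θ θ',
      Integrable (fun x => L k θ x * Real.log (L k θ x / L k θ' x)) (ν k))
    (a : Fin K → Fin K → ℝ)
    (ha_nonneg : ∀ ℓ k, 0 ≤ a ℓ k)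
    (ha_stoch : ∀ k, ∑ ℓ, a ℓ k = 1)
    (ha_prim : ∃ n : ℕ, ∀ ℓ k, 0 < ((Matrix.of a) ^ n) ℓ k)
    (v : Fin K → ℝ)
    (hv_pos : ∀ ℓ, 0 < v ℓ)
    (hv_sum : ∑ ℓ, v ℓ = 1)
    (hv_eig : ∀ ℓ, ∑ k, a ℓ k * v k = v ℓ)
    (θTX : Fin H)
    (μb ψ ψh : Fin K → ℕ → Fin H → Ω → ℝ)
    (μinit : Fin K → Fin H → ℝ)
    (hμinit_pos : ∀ k θ, 0 < μinit k θ)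
    (hμinit_sum : ∀ k, ∑ θ, μinit k θ = 1)
    (hμb0 : ∀ k θ ω, μb k 0 θ ω = μinit k θ)
    (hψ : ∀ k (i : ℕ) θ ω, ψ k (i + 1) θ ω =
      μb k i θ ω * L k θ (ξ k (i + 1) ω) /
        ∑ θ', μb k i θ' ω * L k θ' (ξ k (i + 1) ω))
    (hψh_tx : ∀ k (i : ℕ) ω, ψh k (i + 1) θTX ω = ψ k (i + 1) θTX ω)
    (hψh_ntx : ∀ k (i : ℕ) θ ω, θ ≠ θTX →
      ψh k (i + 1) θ ω = (1 - ψ k (i + 1) θTX ω) / ((H : ℝ) - 1))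
    (hcomb : ∀ k (i : ℕ) θ ω, μb k (i + 1) θ ω =
      Real.exp (∑ ℓ, a ℓ k * Real.log (ψh ℓ (i + 1) θ ω)) /
        ∑ θ', Real.exp (∑ ℓ, a ℓ k * Real.log (ψh ℓ (i + 1) θ' ω)))
    :
    ∀ (θ : Fin H), θ ≠ θTX → ∀ k : Fin K, ∀ᵐ ω ∂P,
      Tendsto (fun (i : ℕ) => (1 / (i : ℝ)) * Real.log (μb k i θ ω / μb k i θTX ω))
        atTop (𝓝 ((∑ m, v m * (∫ ω, Real.log (L m θ0 (ξ m 1 ω) / L m θTX (ξ m 1 ω)) ∂P)) - (∑ m, v m * (∫ ω, Real.log (L m θ0 (ξ m 1 ω) / ((∑ τ ∈ Finset.univ.erase θTX, L m τ (ξ m 1 ω)) / ((H : ℝ) - 1))) ∂P)))) :=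
  asymptotic_rate_of_convergence_without_self_awareness_general (mΩ := mΩ) P K H X ν L θ0 hLpos
    hLmeas ξ hξmeas hξdist hξindep hKL a ha_nonneg ha_stoch ha_prim v hv_sum hv_eig θTX μb ψ ψh hψ
    hψh_tx hψh_ntx hcomb
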